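/- arXiv:1307.7417 — 8 statements merged into one kernel-verified Lean document; each statement's English description precedes it below -/
import Mathlib

section
/- Let L be an IE_B-lattice. Then s is idempotent: s(s(x)) = s(x) for all x ∈ L. -/
/-- An orthomodular lattice: a bounded lattice with an involution `compl`
satisfying De Morgan, `x ⊓ ¬x = ⊥` and the orthomodular law. -/
class OML (L : Type*) extends Lattice L, BoundedOrder L where
  compl : L → L
  compl_compl : ∀ x : L, compl (compl x) = x
  compl_sup : ∀ x y : L, compl (x ⊔ y) = compl x ⊓ compl y
  inf_compl : ∀ x : L, x ⊓ compl x = ⊥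
  orthomodular : ∀ x y : L, x ⊔ (compl x ⊓ (x ⊔ y)) = x ⊔ y

/-- A Boolean pre-state: a `{0,1}`-valued, order preserving map with
`σ(¬x) = 1 - σ(x)`. -/
def IsBooleanPreState {L : Type*} [OML L] (σ : L → ℤ) : Prop :=
  (∀ x : L, σ x = 0 ∨ σ x = 1) ∧
  (∀ x : L, σ (OML.compl x) = 1 - σ x) ∧
  (∀ x y : L, x ≤ y → σ x ≤ σ y)
/-- An orthomodular lattice with an internal Boolean pre-state `s`
(an `IE_B`-lattice), satisfying equations s1–s5. -/
class IEB (L : Type*) extends OML L where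
  s : L → L
  s_one : s ⊤ = ⊤
  s_compl : ∀ x : L, s (compl x) = compl (s x)
  s_sup_s : ∀ x y : L, s (x ⊔ s y) = s x ⊔ s y
  s_central : ∀ x y : L, y = (y ⊓ s x) ⊔ (y ⊓ compl (s x))
  s_inf_le : ∀ x y : L, s (x ⊓ y) ≤ s x ⊓ s y


theorem ieb_s_idem {L : Type*} [IEB L] (x : L) :
    IEB.s (IEB.s x) = IEB.s x := by
  have ctop : OML.compl (⊤ : L) = ⊥ := by
    have := OML.inf_compl (⊤ : L)
    simpa using this
  have sbot : IEB.s (⊥ : L) = ⊥ := by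
    rw [← ctop, IEB.s_compl, IEB.s_one, ctop]
  have := IEB.s_sup_s (⊥ : L) x
  simpa [sbot] using this
end

section
/- Let L be an IE_B-lattice. Then the image s(L), with the restricted operations ∨, ∧, ¬, 0, 1, is a Boolean sublattice of L (i.e., it is closed under the operations and is distributive). -/
theorem ieb_range_boolean_sublattice {L : Type*} [IEB L] :
    let S := Set.range (IEB.s : L → L)
    (⊥ : L) ∈ S ∧ (⊤ : L) ∈ S ∧
    (∀ x ∈ S, OML.compl x ∈ S) ∧
    (∀ x ∈ S, ∀ y ∈ S, x ⊔ y ∈ S) ∧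
    (∀ x ∈ S, ∀ y ∈ S, x ⊓ y ∈ S) ∧
    (∀ x ∈ S, ∀ y ∈ S, ∀ z ∈ S, x ⊓ (y ⊔ z) = (x ⊓ y) ⊔ (x ⊓ z)) := by

  intro S
  have hcompl_top : OML.compl (⊤ : L) = ⊥ := by
    have := OML.inf_compl (⊤ : L)
    simpa using this
  have hbot : (⊥ : L) ∈ S := by
    refine ⟨OML.compl ⊤, ?_⟩
    rw [IEB.s_compl, IEB.s_one, hcompl_top]
  have htop : (⊤ : L) ∈ S := ⟨⊤, IEB.s_one⟩
  have hc : ∀ x ∈ S, OML.compl x ∈ S := by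
    rintro x ⟨a, rfl⟩
    exact ⟨OML.compl a, IEB.s_compl a⟩
  have hsup : ∀ x ∈ S, ∀ y ∈ S, x ⊔ y ∈ S := by
    rintro x ⟨a, rfl⟩ y ⟨b, rfl⟩
    exact ⟨a ⊔ IEB.s b, IEB.s_sup_s a b⟩
  have hinf : ∀ x ∈ S, ∀ y ∈ S, x ⊓ y ∈ S := by
    intro x hx y hy
    have h := hc _ (hsup _ (hc x hx) _ (hc y hy))
    rwa [OML.compl_sup, OML.compl_compl, OML.compl_compl] at h
  refine ⟨hbot, htop, hc, hsup, hinf, ?_⟩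
  rintro x hx y ⟨b, rfl⟩ z ⟨c, rfl⟩
  apply le_antisymm
  · set a := x ⊓ (IEB.s b ⊔ IEB.s c) with ha
    have h1 : a = (a ⊓ IEB.s b) ⊔ (a ⊓ OML.compl (IEB.s b)) := IEB.s_central b a
    have h2 : a ⊓ OML.compl (IEB.s b) =
        (a ⊓ OML.compl (IEB.s b) ⊓ IEB.s c) ⊔
        (a ⊓ OML.compl (IEB.s b) ⊓ OML.compl (IEB.s c)) := IEB.s_central c _
    have h3 : a ⊓ OML.compl (IEB.s b) ⊓ OML.compl (IEB.s c) = ⊥ := by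
      have hle : a ⊓ OML.compl (IEB.s b) ⊓ OML.compl (IEB.s c) ≤
          (IEB.s b ⊔ IEB.s c) ⊓ OML.compl (IEB.s b ⊔ IEB.s c) := by
        rw [OML.compl_sup]
        refine le_inf ?_ ?_
        · exact le_trans (le_trans inf_le_left inf_le_left) (le_trans inf_le_right le_rfl)
        · exact le_inf (le_trans inf_le_left inf_le_right) inf_le_right
      rw [OML.inf_compl] at hle
      exact le_bot_iff.mp hle
    calc a = (a ⊓ IEB.s b) ⊔ (a ⊓ OML.compl (IEB.s b)) := h1
      _ ≤ (x ⊓ IEB.s b) ⊔ (x ⊓ IEB.s c) := by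
          refine sup_le ?_ ?_
          · exact le_sup_of_le_left (inf_le_inf_right _ inf_le_left)
          · rw [h2, h3, sup_bot_eq]
            refine le_sup_of_le_right (le_inf ?_ ?_)
            · exact le_trans inf_le_left (le_trans inf_le_left inf_le_left)
            · exact inf_le_right
  · exact sup_le (inf_le_inf_left x le_sup_left) (inf_le_inf_left x le_sup_right)
end

section
/- Let L be an IE_B-lattice and F a bps-filter of L, i.e., a nonempty subset F such that F is upward closed, s(F) ⊆ F, and x ∈ F iff ¬x ∉ F. Then s(F) is a prime increasing subset of the Boolean algebra s(L). -/
/-- A bps-filter: a nonempty upward closed subset closed under `s` with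
`x ∈ F ↔ ¬x ∉ F`. -/
def IsBpsFilter {L : Type*} [IEB L] (F : Set L) : Prop :=
  F.Nonempty ∧ (∀ x ∈ F, ∀ y, x ≤ y → y ∈ F) ∧ (∀ x ∈ F, IEB.s x ∈ F) ∧
  (∀ x, x ∈ F ↔ OML.compl x ∉ F)

/-- A prime increasing subset of the Boolean algebra `s(L)`: an upward
closed subset of the range of `s` with `x ∈ M ↔ ¬x ∉ M` for `x` in the
range of `s` (the complement in `s(L)` is the restriction of that of `L`). -/
def IsPrimeIncreasingOn {L : Type*} [IEB L] (M : Set L) : Prop :=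
  M ⊆ Set.range (IEB.s : L → L) ∧
  (∀ x ∈ M, ∀ y ∈ Set.range (IEB.s : L → L), x ≤ y → y ∈ M) ∧
  (∀ x ∈ Set.range (IEB.s : L → L), x ∈ M ↔ OML.compl x ∉ M)

theorem bpsFilter_image_prime {L : Type*} [IEB L] (F : Set L)
    (hF : IsBpsFilter F) : IsPrimeIncreasingOn (IEB.s '' F) := by
  obtain ⟨-, hup, hs, hc⟩ := hF
  have sbot : IEB.s (⊥ : L) = ⊥ := by
    have h1 : OML.compl (⊤ : L) = (⊥ : L) := by
      have := OML.inf_compl (⊤ : L)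
      simpa using this
    calc IEB.s (⊥ : L) = IEB.s (OML.compl ⊤) := by rw [h1]
      _ = OML.compl (IEB.s ⊤) := IEB.s_compl ⊤
      _ = ⊥ := by rw [IEB.s_one, h1]
  have sidem : ∀ x : L, IEB.s (IEB.s x) = IEB.s x := by
    intro x
    have := IEB.s_sup_s (⊥ : L) x
    simpa [sbot] using this
  refine ⟨?_, ?_, ?_⟩
  · rintro x ⟨a, -, rfl⟩; exact ⟨a, rfl⟩
  · rintro x ⟨a, ha, rfl⟩ y ⟨b, rfl⟩ hxy
    have hsb : IEB.s b ∈ F := hup _ (hs a ha) _ hxy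
    exact ⟨IEB.s b, hsb, sidem b⟩
  · rintro x ⟨b, rfl⟩
    constructor
    · rintro ⟨a, ha, hab⟩ ⟨c, hcF, hcEq⟩
      have hsa : IEB.s a ∈ F := hs a ha
      rw [hab] at hsa
      have hsc : IEB.s c ∈ F := hs c hcF
      rw [hcEq] at hsc
      exact ((hc (IEB.s b)).mp hsa) hsc
    · intro hni
      by_contra hx
      have hF' : IEB.s b ∉ F := fun h => hx ⟨IEB.s b, h, sidem b⟩
      have hcompl : OML.compl (IEB.s b) ∈ F := by
        by_contra h
        exact hF' ((hc (IEB.s b)).mpr h)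
      have heq : IEB.s (OML.compl (IEB.s b)) = OML.compl (IEB.s b) := by
        rw [IEB.s_compl, sidem]
      exact hni ⟨OML.compl (IEB.s b), hcompl, heq⟩
end

section
/- Let L be an IE_B-lattice. The map M ↦ F_M = {x ∈ L : s(x) ∈ M} is a bijection between prime increasing subsets of the Boolean algebra s(L) and bps-filters of L. -/
section Aux
variable {L : Type*} [IEB L]

lemma compl_top' : (OML.compl ⊤ : L) = ⊥ := by
  have := OML.inf_compl (⊤ : L)
  simpa using this

lemma s_bot' : IEB.s (⊥ : L) = ⊥ := by
  have : IEB.s (OML.compl (⊤ : L)) = OML.compl (IEB.s (⊤ : L)) := IEB.s_compl ⊤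
  rw [compl_top', IEB.s_one, compl_top'] at this
  exact this

lemma s_idem' (x : L) : IEB.s (IEB.s x) = IEB.s x := by
  have := IEB.s_sup_s (⊥ : L) x
  rw [s_bot'] at this
  simpa using this

lemma s_mono' {x y : L} (h : x ≤ y) : IEB.s x ≤ IEB.s y := by
  have hx : x ⊓ y = x := inf_eq_left.mpr h
  have := IEB.s_inf_le x y
  rw [hx] at this
  exact this.trans inf_le_right

end Aux

theorem prime_bijOn_bpsFilter {L : Type*} [IEB L] :
    Set.BijOn (fun M : Set L => {x : L | IEB.s x ∈ M})
      {M | IsPrimeIncreasingOn M} {F | IsBpsFilter F} := by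
  constructor
  · -- MapsTo
    rintro M ⟨hMr, hMup, hMpr⟩
    refine ⟨⟨⊤, ?_⟩, ?_, ?_, ?_⟩
    · -- ⊤ ∈ F_M
      simp only [Set.mem_setOf_eq, IEB.s_one]
      by_contra htop
      have hiff := hMpr ⊤ ⟨⊤, IEB.s_one⟩
      rw [compl_top'] at hiff
      have hbot : (⊥ : L) ∈ M := not_not.mp (fun hb => htop (hiff.mpr hb))
      exact htop (hMup ⊥ hbot ⊤ ⟨⊤, IEB.s_one⟩ le_top)
    · intro x hx y hxy
      exact hMup _ hx _ ⟨y, rfl⟩ (s_mono' hxy)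
    · intro x hx
      simpa only [Set.mem_setOf_eq, s_idem'] using hx
    · intro x
      simp only [Set.mem_setOf_eq, IEB.s_compl]
      exact hMpr _ ⟨x, rfl⟩
  constructor
  · -- InjOn
    rintro M ⟨hMr, _, _⟩ M' ⟨hMr', _, _⟩ h
    have key : ∀ z : L, z ∈ Set.range (IEB.s : L → L) → (z ∈ M ↔ z ∈ M') := by
      rintro z ⟨y, rfl⟩
      have : ∀ N : Set L, (IEB.s y ∈ N ↔ IEB.s y ∈ {x : L | IEB.s x ∈ N}) := by
        intro N; simp [Set.mem_setOf_eq, s_idem']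
      rw [this M, this M', show {x : L | IEB.s x ∈ M} = {x : L | IEB.s x ∈ M'} from h]
    ext z
    constructor
    · intro hz; exact (key z (hMr hz)).mp hz
    · intro hz; exact (key z (hMr' hz)).mpr hz
  · -- SurjOn
    rintro F ⟨⟨a, ha⟩, hFup, hFs, hFpr⟩
    refine ⟨F ∩ Set.range (IEB.s : L → L), ⟨?_, ?_, ?_⟩, ?_⟩
    · exact Set.inter_subset_right
    · rintro x ⟨hxF, _⟩ y hy hxy
      exact ⟨hFup x hxF y hxy, hy⟩
    · rintro x ⟨y, rfl⟩
      have hc : OML.compl (IEB.s y) ∈ Set.range (IEB.s : L → L) :=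
        ⟨OML.compl y, IEB.s_compl y⟩
      constructor
      · rintro ⟨hxF, _⟩ ⟨hcF, _⟩
        exact (hFpr (IEB.s y)).mp hxF hcF
      · intro hni
        have : OML.compl (IEB.s y) ∉ F := fun hcF => hni ⟨hcF, hc⟩
        exact ⟨(hFpr (IEB.s y)).mpr this, ⟨y, rfl⟩⟩
    · -- F_{M} = F
      ext x
      simp only [Set.mem_setOf_eq, Set.mem_inter_iff, Set.mem_range]
      constructor
      · rintro ⟨hsF, _⟩
        by_contra hx
        have h1 : OML.compl x ∈ F := (hFpr x).not_left.mp (by simpa using hx)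
        have h2 : IEB.s (OML.compl x) ∈ F := hFs _ h1
        rw [IEB.s_compl] at h2
        exact (hFpr (IEB.s x)).mp hsF h2
      · intro hx
        exact ⟨hFs x hx, ⟨x, rfl⟩⟩
end

section
/- Let L be an IE_B-lattice. The map σ ↦ σ⁻¹(1) is a bijection between the set of Boolean pre-states on L coherent with s and the set of bps-filters of L. -/
theorem coherent_bps_bijOn_bpsFilter {L : Type*} [IEB L] :
    Set.BijOn (fun σ : L → ℤ => {x : L | σ x = 1})
      {σ | IsBooleanPreState σ ∧ ∀ x : L, σ x = 1 ↔ σ (IEB.s x) = 1}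
      {F | IsBpsFilter F} := by

  classical
  constructor
  · -- MapsTo
    rintro σ ⟨⟨hval, hcompl, hmono⟩, hcoh⟩
    have htop : σ ⊤ = 1 := by
      have hct : OML.compl (⊤ : L) = ⊥ := by
        have := OML.inf_compl (⊤ : L)
        rwa [top_inf_eq] at this
      rcases hval ⊤ with h0 | h1
      · have hb := hcompl (⊤ : L)
        rw [hct, h0] at hb
        have := hmono ⊥ ⊤ bot_le
        omega
      · exact h1
    refine ⟨⟨⊤, htop⟩, ?_, ?_, ?_⟩
    · intro x hx y hxy
      have := hmono x y hxy
      rcases hval y with h | h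
      · simp only [Set.mem_setOf_eq] at hx; omega
      · exact h
    · intro x hx
      exact (hcoh x).1 hx
    · intro x
      have hb := hcompl x
      simp only [Set.mem_setOf_eq]
      rcases hval x with h | h <;> rcases hval (OML.compl x) with h' | h' <;> omega
  constructor
  · -- InjOn
    rintro σ ⟨⟨hvalσ, _, _⟩, _⟩ τ ⟨⟨hvalτ, _, _⟩, _⟩ hEq
    have hEq' : ∀ x : L, σ x = 1 ↔ τ x = 1 := fun x => by
      simpa using Set.ext_iff.mp hEq x
    funext x
    rcases hvalσ x with h | h <;> rcases hvalτ x with h' | h' <;>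
      first
        | omega
        | (exfalso; have := hEq' x; omega)
  · -- SurjOn
    rintro F ⟨⟨w, hw⟩, hup, hs, hcn⟩
    refine ⟨fun x => if x ∈ F then 1 else 0, ⟨⟨?_, ?_, ?_⟩, ?_⟩, ?_⟩
    · intro x; by_cases h : x ∈ F <;> simp [h]
    · intro x
      by_cases h : x ∈ F
      · have : OML.compl x ∉ F := (hcn x).1 h
        simp [h, this]
      · have : OML.compl x ∈ F := by
          by_contra hc; exact h ((hcn x).2 hc)
        simp [h, this]
    · intro x y hxy
      by_cases h : x ∈ F
      · have : y ∈ F := hup x h y hxy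
        simp [h, this]
      · simp [h]; positivity
    · intro x
      by_cases h : x ∈ F
      · have : IEB.s x ∈ F := hs x h
        simp [h, this]
      · have hcx : OML.compl x ∈ F := by
          by_contra hc; exact h ((hcn x).2 hc)
        have hscx : IEB.s (OML.compl x) ∈ F := hs _ hcx
        rw [IEB.s_compl] at hscx
        have : IEB.s x ∉ F := fun hsx => (hcn (IEB.s x)).1 hsx hscx
        simp [h, this]
    · ext x
      by_cases h : x ∈ F <;> simp [h]
end

section
/- Let L be an IE_B-lattice and a ∈ s(L). Then the interval [0,a] with operations ∧, ∨, ¬_a x = ¬x ∧ a, the restriction of s, constants 0 and a, is again an IE_B-lattice, and s([0,a]) = [0,a] ∩ s(L). -/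
section Aux
variable {L : Type*} [IEB L]

open IEB

local notation "oc" => (OML.compl : L → L)

lemma oml_compl_inf (x y : L) : oc (x ⊓ y) = oc x ⊔ oc y := by
  have h := OML.compl_sup (oc x) (oc y)
  rw [OML.compl_compl, OML.compl_compl] at h
  rw [← h, OML.compl_compl]

lemma oml_compl_anti {x y : L} (h : x ≤ y) : oc y ≤ oc x := by
  have h2 : oc (x ⊔ y) = oc x ⊓ oc y := OML.compl_sup x y
  rw [sup_eq_right.mpr h] at h2
  rw [h2]; exact inf_le_left

lemma oml_omod {x y : L} (h : x ≤ y) : y = x ⊔ (oc x ⊓ y) := by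
  have h2 := OML.orthomodular x y
  rw [sup_eq_right.mpr h] at h2
  exact h2.symm

lemma oml_omod_dual {x a : L} (h : x ≤ a) : a ⊓ (oc a ⊔ x) = x := by
  have h2 : oc a ≤ oc x := oml_compl_anti h
  have h3 := oml_omod h2
  have h4 := congrArg oc h3
  rw [OML.compl_compl, OML.compl_sup, OML.compl_compl, oml_compl_inf,
    OML.compl_compl] at h4
  exact h4.symm

lemma ieb_bot_eq : (⊥ : L) = oc ⊤ := by
  have h := OML.inf_compl (⊤ : L)
  rw [top_inf_eq] at h
  exact h.symm

lemma ieb_s_bot : (s ⊥ : L) = ⊥ := by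
  rw [ieb_bot_eq, IEB.s_compl, IEB.s_one, ← ieb_bot_eq]

lemma ieb_s_idem_s17 (x : L) : s (s x) = s x := by
  have h := IEB.s_sup_s (⊥ : L) x
  rwa [bot_sup_eq, ieb_s_bot, bot_sup_eq] at h

lemma ieb_s_mono {x y : L} (h : x ≤ y) : (s x : L) ≤ s y := by
  have h2 := IEB.s_inf_le x y
  rw [inf_eq_left.mpr h] at h2
  exact h2.trans inf_le_right

lemma ieb_s_inf_s (x y : L) : s (x ⊓ s y) = s x ⊓ s y := by
  have h := IEB.s_sup_s (oc x) (oc y)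
  have h2 := congrArg oc h
  simp only [← IEB.s_compl, OML.compl_sup, OML.compl_compl] at h2
  exact h2

end Aux


theorem ieb_interval {L : Type*} [IEB L] (a : L)
    (ha : a ∈ Set.range (IEB.s : L → L)) :
    let N : L → L := fun x => OML.compl x ⊓ a
    -- the interval [0,a] is an orthomodular lattice
    (∀ x, x ≤ a → N (N x) = x) ∧
    (∀ x, x ≤ a → ∀ y, y ≤ a → N (x ⊔ y) = N x ⊓ N y) ∧
    (∀ x, x ≤ a → x ⊓ N x = ⊥) ∧
    (∀ x, x ≤ a → ∀ y, y ≤ a → x ⊔ (N x ⊓ (x ⊔ y)) = x ⊔ y) ∧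
    -- s restricts to [0,a] and satisfies s1–s5 there
    (∀ x, x ≤ a → IEB.s x ≤ a) ∧
    IEB.s a = a ∧
    (∀ x, x ≤ a → IEB.s (N x) = N (IEB.s x)) ∧
    (∀ x, x ≤ a → ∀ y, y ≤ a → IEB.s (x ⊔ IEB.s y) = IEB.s x ⊔ IEB.s y) ∧
    (∀ x, x ≤ a → ∀ y, y ≤ a → y = (y ⊓ IEB.s x) ⊔ (y ⊓ N (IEB.s x))) ∧
    (∀ x, x ≤ a → ∀ y, y ≤ a → IEB.s (x ⊓ y) ≤ IEB.s x ⊓ IEB.s y) ∧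
    -- s([0,a]) = [0,a] ∩ s(L)
    (IEB.s '' Set.Iic a = Set.Iic a ∩ Set.range (IEB.s : L → L)) := by
  obtain ⟨b, hb⟩ := ha
  intro N
  have hsa : IEB.s a = a := by rw [← hb, ieb_s_idem_s17]
  have hrange : ∀ x : L, x ≤ a → IEB.s x ≤ a := by
    intro x hx
    have h := ieb_s_mono hx
    rwa [hsa] at h
  refine ⟨?_, ?_, ?_, ?_, hrange, hsa, ?_, ?_, ?_, ?_, ?_⟩
  · intro x hx
    show OML.compl (OML.compl x ⊓ a) ⊓ a = x
    rw [oml_compl_inf, OML.compl_compl, inf_comm, sup_comm]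
    exact oml_omod_dual hx
  · intro x _ y _
    show OML.compl (x ⊔ y) ⊓ a = (OML.compl x ⊓ a) ⊓ (OML.compl y ⊓ a)
    rw [OML.compl_sup]
    exact inf_inf_distrib_right _ _ _
  · intro x _
    show x ⊓ (OML.compl x ⊓ a) = ⊥
    rw [← inf_assoc, OML.inf_compl, bot_inf_eq]
  · intro x hx y hy
    show x ⊔ ((OML.compl x ⊓ a) ⊓ (x ⊔ y)) = x ⊔ y
    have hxy : x ⊔ y ≤ a := sup_le hx hy
    rw [inf_assoc, inf_eq_right.mpr hxy]
    exact OML.orthomodular x y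
  · intro x _
    show IEB.s (OML.compl x ⊓ a) = OML.compl (IEB.s x) ⊓ a
    calc IEB.s (OML.compl x ⊓ a) = IEB.s (OML.compl x ⊓ IEB.s a) := by rw [hsa]
      _ = IEB.s (OML.compl x) ⊓ IEB.s a := ieb_s_inf_s _ _
      _ = OML.compl (IEB.s x) ⊓ a := by rw [IEB.s_compl, hsa]
  · intro x _ y _
    exact IEB.s_sup_s x y
  · intro x _ y hy
    show y = (y ⊓ IEB.s x) ⊔ (y ⊓ (OML.compl (IEB.s x) ⊓ a))
    rw [← inf_assoc, inf_eq_left.mpr (le_trans inf_le_left hy)]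
    exact IEB.s_central x y
  · intro x _ y _
    exact IEB.s_inf_le x y
  · ext y
    constructor
    · rintro ⟨x, hx, rfl⟩
      exact ⟨hrange x hx, x, rfl⟩
    · rintro ⟨hy, z, hz⟩
      exact ⟨y, hy, by rw [← hz, ieb_s_idem_s17]⟩
end

section
/- Let L be an IE_B-lattice and z ∈ s(L). Then the relation θ_z = {(a,b) ∈ L² : a∧z = b∧z} is a congruence of L compatible with ∧, ∨, ¬, and s, and the map x ↦ (x∧z, x∧¬z) is an isomorphism of IE_B-lattices from L onto the product [0,z] × [0,¬z] (with relative orthocomplements and restricted s). -/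
section Aux

variable {L : Type*}

open OML

lemma OML.compl_top [OML L] : compl (⊤ : L) = ⊥ := by
  have h := inf_compl (⊤ : L); simpa using h

lemma OML.compl_anti [OML L] {x y : L} (h : x ≤ y) : compl y ≤ compl x := by
  have h2 : compl (x ⊔ y) = compl x ⊓ compl y := compl_sup x y
  rw [sup_eq_right.mpr h] at h2
  rw [h2]; exact inf_le_left

lemma OML.compl_inf [OML L] (x y : L) : compl (x ⊓ y) = compl x ⊔ compl y := by
  have h := compl_sup (compl x) (compl y)
  rw [compl_compl, compl_compl] at h
  rw [← h, compl_compl]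

lemma OML.om1 [OML L] {a b : L} (h : a ≤ b) : b = a ⊔ (compl a ⊓ b) := by
  have h2 := orthomodular a b
  rw [sup_eq_right.mpr h] at h2
  exact h2.symm

lemma OML.om2 [OML L] {a b : L} (h : a ≤ b) : a = b ⊓ (a ⊔ compl b) := by
  have h1 : compl b ≤ compl a := compl_anti h
  have h2 := om1 h1
  have h3 := congrArg compl h2
  rw [compl_compl, compl_sup, compl_inf, compl_compl, compl_compl] at h3
  rw [sup_comm a (compl b)]; exact h3

/-- If `u ≤ z` and `w ≤ ¬z` then `(u ⊔ w) ⊓ z = u`. -/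
lemma OML.split_inf [OML L] {z u w : L} (hu : u ≤ z) (hw : w ≤ compl z) :
    (u ⊔ w) ⊓ z = u := by
  apply le_antisymm
  · have h1 : (u ⊔ w) ⊓ z ≤ (u ⊔ compl z) ⊓ z :=
      inf_le_inf_right z (sup_le_sup_left hw u)
    have h2 : u = z ⊓ (u ⊔ compl z) := om2 hu
    calc (u ⊔ w) ⊓ z ≤ (u ⊔ compl z) ⊓ z := h1
      _ = z ⊓ (u ⊔ compl z) := inf_comm _ _
      _ = u := h2.symm
  · exact le_inf le_sup_left hu

/-- Distributivity of a "central" element. -/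
lemma OML.central_distrib [OML L] {c : L}
    (hc : ∀ y : L, y = (y ⊓ c) ⊔ (y ⊓ compl c)) (x y : L) :
    (x ⊔ y) ⊓ c = (x ⊓ c) ⊔ (y ⊓ c) := by
  have hxy : x ⊔ y = ((x ⊓ c) ⊔ (y ⊓ c)) ⊔ ((x ⊓ compl c) ⊔ (y ⊓ compl c)) := by
    conv_lhs => rw [hc x, hc y]
    ac_rfl
  rw [hxy, split_inf (sup_le inf_le_right inf_le_right)
    (sup_le inf_le_right inf_le_right)]

open IEB

lemma IEB.s_bot [IEB L] : s (⊥ : L) = ⊥ := by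
  have h : s (compl (⊤ : L)) = compl (s (⊤ : L)) := s_compl ⊤
  rw [s_one, OML.compl_top] at h
  exact h

lemma IEB.s_sup' [IEB L] {z : L} (hz : z ∈ Set.range (s : L → L)) (x : L) :
    s (x ⊔ z) = s x ⊔ z := by
  obtain ⟨w, hw⟩ := hz
  rw [← hw, s_sup_s]

lemma IEB.compl_mem_range [IEB L] {z : L} (hz : z ∈ Set.range (s : L → L)) :
    compl z ∈ Set.range (s : L → L) := by
  obtain ⟨w, hw⟩ := hz
  exact ⟨compl w, by rw [s_compl, hw]⟩

lemma IEB.s_inf' [IEB L] {z : L} (hz : z ∈ Set.range (s : L → L)) (x : L) :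
    s (x ⊓ z) = s x ⊓ z := by
  have h1 : x ⊓ z = compl (compl x ⊔ compl z) := by
    rw [OML.compl_sup, OML.compl_compl, OML.compl_compl]
  rw [h1, s_compl, s_sup' (compl_mem_range hz), OML.compl_sup, OML.compl_compl,
    ← s_compl, OML.compl_compl]

lemma IEB.central' [IEB L] {z : L} (hz : z ∈ Set.range (s : L → L)) (y : L) :
    y = (y ⊓ z) ⊔ (y ⊓ compl z) := by
  obtain ⟨w, hw⟩ := hz
  have h := s_central w y
  rw [hw] at h
  exact h

end Aux

theorem ieb_factor_decomposition {L : Type*} [IEB L] (z : L)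
    (hz : z ∈ Set.range (IEB.s : L → L)) :
    let g : L → L × L := fun x => (x ⊓ z, x ⊓ OML.compl z)
    -- θ_z = {(a,b) : a ⊓ z = b ⊓ z} is compatible with ¬, s, ⊓ and ⊔
    (∀ a b : L, a ⊓ z = b ⊓ z →
      OML.compl a ⊓ z = OML.compl b ⊓ z ∧ IEB.s a ⊓ z = IEB.s b ⊓ z) ∧
    (∀ a b c d : L, a ⊓ z = b ⊓ z → c ⊓ z = d ⊓ z →
      (a ⊓ c) ⊓ z = (b ⊓ d) ⊓ z ∧ (a ⊔ c) ⊓ z = (b ⊔ d) ⊓ z) ∧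
    -- g is a bijection from L onto [0,z] × [0,¬z]
    Set.BijOn g Set.univ {p : L × L | p.1 ≤ z ∧ p.2 ≤ OML.compl z} ∧
    -- g is a homomorphism of IE_B-lattices (componentwise operations on
    -- the intervals, with relative orthocomplements and restricted s)
    (∀ x y : L, g (x ⊓ y) = ((g x).1 ⊓ (g y).1, (g x).2 ⊓ (g y).2)) ∧
    (∀ x y : L, g (x ⊔ y) = ((g x).1 ⊔ (g y).1, (g x).2 ⊔ (g y).2)) ∧
    (∀ x : L, g (OML.compl x) =
      (OML.compl (x ⊓ z) ⊓ z, OML.compl (x ⊓ OML.compl z) ⊓ OML.compl z)) ∧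
    (∀ x : L, g (IEB.s x) = (IEB.s (x ⊓ z), IEB.s (x ⊓ OML.compl z))) ∧
    g ⊤ = (z, OML.compl z) ∧ g ⊥ = (⊥, ⊥) := by
  intro g
  have hznn : OML.compl z ∈ Set.range (IEB.s : L → L) := IEB.compl_mem_range hz
  have hc : ∀ y : L, y = (y ⊓ z) ⊔ (y ⊓ OML.compl z) := IEB.central' hz
  have hc' : ∀ y : L,
      y = (y ⊓ OML.compl z) ⊔ (y ⊓ OML.compl (OML.compl z)) := by
    intro y
    rw [OML.compl_compl, sup_comm]
    exact hc y
  have hD : ∀ x y : L, (x ⊔ y) ⊓ z = (x ⊓ z) ⊔ (y ⊓ z) := OML.central_distrib hc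
  have hD' : ∀ x y : L,
      (x ⊔ y) ⊓ OML.compl z = (x ⊓ OML.compl z) ⊔ (y ⊓ OML.compl z) :=
    OML.central_distrib hc'
  have hbz : OML.compl z ⊓ z = ⊥ := by rw [inf_comm]; exact OML.inf_compl z
  have hbz' : OML.compl (OML.compl z) ⊓ OML.compl z = ⊥ := by
    rw [OML.compl_compl]; exact OML.inf_compl z
  have hcompl : ∀ a : L, OML.compl (a ⊓ z) ⊓ z = OML.compl a ⊓ z := by
    intro a
    rw [OML.compl_inf, hD, hbz, sup_bot_eq]
  have hcompl' : ∀ a : L,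
      OML.compl (a ⊓ OML.compl z) ⊓ OML.compl z = OML.compl a ⊓ OML.compl z := by
    intro a
    rw [OML.compl_inf, hD', hbz', sup_bot_eq]
  refine ⟨?_, ?_, ⟨?_, ?_, ?_⟩, ?_, ?_, ?_, ?_, ?_, ?_⟩
  · intro a b h
    constructor
    · rw [← hcompl a, ← hcompl b, h]
    · rw [← IEB.s_inf' hz a, ← IEB.s_inf' hz b, h]
  · intro a b c d h1 h2
    constructor
    · rw [inf_inf_distrib_right, h1, h2, ← inf_inf_distrib_right]
    · rw [hD, h1, h2, ← hD]
  · intro x _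
    exact ⟨inf_le_right, inf_le_right⟩
  · intro x _ y _ hxy
    simp only [g, Prod.mk.injEq] at hxy
    obtain ⟨h1, h2⟩ := hxy
    calc x = (x ⊓ z) ⊔ (x ⊓ OML.compl z) := hc x
      _ = (y ⊓ z) ⊔ (y ⊓ OML.compl z) := by rw [h1, h2]
      _ = y := (hc y).symm
  · intro p hp
    obtain ⟨h1, h2⟩ := hp
    refine ⟨p.1 ⊔ p.2, trivial, ?_⟩
    have e1 : (p.1 ⊔ p.2) ⊓ z = p.1 := OML.split_inf h1 h2
    have e2 : (p.1 ⊔ p.2) ⊓ OML.compl z = p.2 := by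
      rw [sup_comm]
      exact OML.split_inf h2 (by rw [OML.compl_compl]; exact h1)
    simp only [g, Prod.mk.injEq, e1, e2]

  · intro x y
    simp only [g, Prod.mk.injEq]
    exact ⟨inf_inf_distrib_right x y z, inf_inf_distrib_right x y _⟩
  · intro x y
    simp only [g, Prod.mk.injEq]
    exact ⟨hD x y, hD' x y⟩
  · intro x
    simp only [g, Prod.mk.injEq]
    exact ⟨(hcompl x).symm, (hcompl' x).symm⟩
  · intro x
    simp only [g, Prod.mk.injEq]
    exact ⟨(IEB.s_inf' hz x).symm, (IEB.s_inf' hznn x).symm⟩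
  · simp only [g, top_inf_eq]
  · simp only [g, bot_inf_eq]
end

section
/- Let L be an orthomodular lattice and σ : L → {0,1} a two-valued state (σ(1)=1 and σ(x∨y)=σ(x)+σ(y) whenever x ≤ ¬y). Then the following are equivalent: (1) σ is Jauch-Piron, i.e., σ(x)=σ(y)=1 implies there exists c ≤ x, c ≤ y with σ(c)=1; (2) σ(x)=σ(y)=1 implies σ(x∧y)=1; (3) σ(x)·σ(¬x∨y) = σ(x∧y) for all x,y. -/
/-- A two-valued state on an orthomodular lattice. -/
def IsTwoValuedState {L : Type*} [OML L] (σ : L → ℤ) : Prop :=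
  (∀ x : L, σ x = 0 ∨ σ x = 1) ∧ σ (⊤ : L) = 1 ∧
  (∀ x y : L, x ≤ OML.compl y → σ (x ⊔ y) = σ x + σ y)

namespace JPaux

variable {L : Type*} [OML L]

lemma compl_inf (a b : L) : OML.compl (a ⊓ b) = OML.compl a ⊔ OML.compl b := by
  have := OML.compl_sup (OML.compl a) (OML.compl b)
  rw [OML.compl_compl, OML.compl_compl] at this
  rw [← this, OML.compl_compl]

lemma compl_top : OML.compl (⊤ : L) = ⊥ := by
  have := OML.inf_compl (⊤ : L)
  rwa [top_inf_eq] at this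

lemma compl_bot : OML.compl (⊥ : L) = ⊤ := by
  rw [← compl_top, OML.compl_compl]

lemma sup_compl (x : L) : x ⊔ OML.compl x = ⊤ := by
  have h1 : OML.compl (x ⊔ OML.compl x) = ⊥ := by
    rw [OML.compl_sup, OML.compl_compl, inf_comm, OML.inf_compl]
  have := congrArg OML.compl h1
  rwa [OML.compl_compl, compl_bot] at this

variable {σ : L → ℤ} (h : IsTwoValuedState σ)

include h

lemma sigma_compl (x : L) : σ (OML.compl x) = 1 - σ x := by
  obtain ⟨h01, htop, hadd⟩ := h
  have hx : x ≤ OML.compl (OML.compl x) := by rw [OML.compl_compl]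
  have := hadd x (OML.compl x) hx
  rw [sup_compl, htop] at this
  linarith

lemma sigma_bot : σ (⊥ : L) = 0 := by
  have := sigma_compl h (⊤ : L)
  rw [compl_top] at this
  rw [this, h.2.1]; ring

lemma sigma_mono {x y : L} (hxy : x ≤ y) : σ x ≤ σ y := by
  obtain ⟨h01, htop, hadd⟩ := h
  set z := OML.compl x ⊓ y with hz
  have hxz : x ≤ OML.compl z := by
    rw [hz, compl_inf, OML.compl_compl]; exact le_sup_left
  have hsup : x ⊔ z = y := by
    have := OML.orthomodular x y
    rwa [sup_eq_right.mpr hxy] at this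
  have := hadd x z hxz
  rw [hsup] at this
  have hz0 : 0 ≤ σ z := by rcases h01 z with h' | h' <;> omega
  omega

lemma sigma_le_one (x : L) : σ x ≤ 1 := by rcases h.1 x with h' | h' <;> omega

lemma sigma_nonneg (x : L) : 0 ≤ σ x := by rcases h.1 x with h' | h' <;> omega

end JPaux

theorem jauchPiron_tfae {L : Type*} [OML L] (σ : L → ℤ)
    (h : IsTwoValuedState σ) :
    List.TFAE
      [∀ x y : L, σ x = 1 → σ y = 1 → ∃ c : L, c ≤ x ∧ c ≤ y ∧ σ c = 1,
       ∀ x y : L, σ x = 1 → σ y = 1 → σ (x ⊓ y) = 1,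
       ∀ x y : L, σ x * σ (OML.compl x ⊔ y) = σ (x ⊓ y)] := by
  open JPaux in
  tfae_have 2 → 1 := by
    intro h2 x y hx hy
    exact ⟨x ⊓ y, inf_le_left, inf_le_right, h2 x y hx hy⟩
  tfae_have 1 → 2 := by
    intro h1 x y hx hy
    obtain ⟨c, hcx, hcy, hc⟩ := h1 x y hx hy
    have h1' := sigma_mono h (le_inf hcx hcy)
    have h2' := sigma_le_one h (x ⊓ y)
    omega
  tfae_have 2 → 3 := by
    intro h2 x y
    rcases h.1 x with hx | hx
    · rw [hx, zero_mul]
      have h1' := sigma_mono h (inf_le_left (a := x) (b := y))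
      have h2' := sigma_nonneg h (x ⊓ y)
      omega
    · rw [hx, one_mul]
      rcases h.1 (OML.compl x ⊔ y) with hs | hs
      · rw [hs]
        have h1' := sigma_mono h (le_sup_right (a := OML.compl x) (b := y))
        have h2' := sigma_mono h (inf_le_right (a := x) (b := y))
        have h3' := sigma_nonneg h (x ⊓ y)
        omega
      · rw [hs]
        -- decompose ¬x ⊔ y = y ⊔ e with e = ¬y ⊓ (¬x ⊔ y), y ⊥ e
        set e := OML.compl y ⊓ (OML.compl x ⊔ y) with he
        have hye : y ≤ OML.compl e := by
          rw [he, JPaux.compl_inf, OML.compl_compl]; exact le_sup_left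
        have hsup : y ⊔ e = OML.compl x ⊔ y := by
          have := OML.orthomodular y (OML.compl x)
          rw [sup_comm y (OML.compl x)] at this
          rw [he, this]
        have hadd := h.2.2 y e hye
        rw [hsup, hs] at hadd
        rcases h.1 y with hy | hy
        · -- σ e = 1, derive contradiction
          have hse : σ e = 1 := by omega
          have hxe := h2 x e hx hse
          have hbot : x ⊓ e = ⊥ := by
            have h1' : x ⊓ e ≤ x ⊓ OML.compl y :=
              inf_le_inf_left x inf_le_left
            have h2' : x ⊓ e ≤ OML.compl (x ⊓ OML.compl y) := by
              rw [JPaux.compl_inf, OML.compl_compl]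
              exact le_trans inf_le_right inf_le_right
            have := le_inf h1' h2'
            rw [OML.inf_compl] at this
            exact le_bot_iff.mp this
          rw [hbot, sigma_bot h] at hxe
          omega
        · exact (h2 x y hx hy).symm
  tfae_have 3 → 2 := by
    intro h3 x y hx hy
    have hs : σ (OML.compl x ⊔ y) = 1 := by
      have h1' := sigma_mono h (le_sup_right (a := OML.compl x) (b := y))
      have h2' := sigma_le_one h (OML.compl x ⊔ y)
      omega
    have := h3 x y
    rw [hx, hs] at this
    omega
  tfae_finish
end
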